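/- arXiv:2210.09695 — 4 statements merged into one kernel-verified Lean document; each statement's English description precedes it below -/
import Mathlib

section
/- Let C be a nonempty compact subset of R^d and A, B ∈ R^d with ⟨B, x⟩ > 0 for all x ∈ C. Define ψ(x) = ⟨A, x⟩/⟨B, x⟩ and let t* = inf_{x∈C} ψ(x). Then inf_{x∈C} ⟨A − t*·B, x⟩ = 0. -/
/-!
The ratio `f / g` attains its infimum `t` at some `x₀` of the compact set `C`. Since `g > 0` on `C`,
`t ≤ f x / g x` is equivalent to `0 ≤ f x - t * g x`, and equality holds at `x₀`; so `0` is the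
least value of `f - t • g` on `C`.
-/

open Finset

theorem IsCompact.isLeast_image_sub_sInf_div_mul {X : Type*} [TopologicalSpace X] {C : Set X}
    (hC : IsCompact C) (hne : C.Nonempty) {f g : X → ℝ} (hf : ContinuousOn f C)
    (hg : ContinuousOn g C) (hpos : ∀ x ∈ C, 0 < g x) :
    IsLeast ((fun x => f x - sInf ((fun x => f x / g x) '' C) * g x) '' C) 0 := by
  obtain ⟨x₀, hx₀, hmin⟩ :=
    hC.exists_isMinOn hne (hf.div hg fun x hx => (hpos x hx).ne')
  have ht : sInf ((fun x => f x / g x) '' C) = f x₀ / g x₀ :=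
    IsLeast.csInf_eq ⟨Set.mem_image_of_mem _ hx₀, Set.forall_mem_image.2 hmin⟩
  rw [ht]
  refine ⟨⟨x₀, hx₀, ?_⟩, Set.forall_mem_image.2 fun x hx => ?_⟩
  · simp [div_mul_cancel₀ _ (hpos x₀ hx₀).ne']
  · have hle : f x₀ / g x₀ ≤ f x / g x := hmin hx
    rw [le_div_iff₀ (hpos x hx)] at hle
    exact sub_nonneg.2 hle

theorem sum_sub_mul_mul_eq {ι : Type*} (s : Finset ι) (A B x : ι → ℝ) (t : ℝ) :
    ∑ i ∈ s, (A i - t * B i) * x i = ∑ i ∈ s, A i * x i - t * ∑ i ∈ s, B i * x i := by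
  simp only [sub_mul, sum_sub_distrib, mul_sum, mul_assoc]

/-- Lemma A.1: for a ratio-of-linear metric ψ = ⟨A,·⟩/⟨B,·⟩ on a compact set C
with ⟨B,x⟩ > 0 on C, and t* = inf ψ, we have inf_{x∈C} ⟨A − t*B, x⟩ = 0. -/
theorem stmt_1 {d : ℕ} (C : Set (Fin d → ℝ)) (hne : C.Nonempty) (hcomp : IsCompact C)
    (A B : Fin d → ℝ) (hB : ∀ x ∈ C, 0 < ∑ i, B i * x i)
    (ψ : (Fin d → ℝ) → ℝ)
    (hψ : ∀ x, ψ x = (∑ i, A i * x i) / (∑ i, B i * x i))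
    (tstar : ℝ) (ht : tstar = sInf (ψ '' C)) :
    sInf ((fun x => ∑ i, (A i - tstar * B i) * x i) '' C) = 0 := by
  obtain rfl : ψ = fun x => (∑ i, A i * x i) / (∑ i, B i * x i) := funext hψ
  simp only [sum_sub_mul_mul_eq, ht]
  exact (hcomp.isLeast_image_sub_sInf_div_mul hne (by fun_prop) (by fun_prop) hB).csInf_eq
end

section
/- Let C be a nonempty compact subset of R^d and A, B ∈ R^d with ⟨B, x⟩ > 0 for all x ∈ C. Define ψ(x) = ⟨A, x⟩/⟨B, x⟩, t* = inf_{x∈C} ψ(x), and L* = A − t*·B. If x* ∈ C minimizes ⟨L*, x⟩ over C, then x* minimizes ψ over C, i.e., ψ(x*) = inf_{x∈C} ψ(x). -/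
/-! Dinkelbach's argument. The infimum t* of ψ = ⟨A,·⟩/⟨B,·⟩ over the compact set C is attained
at some x₀, where ⟨L*, x₀⟩ = ⟨A, x₀⟩ - t*⟨B, x₀⟩ = 0. A minimizer x* of ⟨L*,·⟩ therefore has
⟨A, x*⟩ - t*⟨B, x*⟩ ≤ 0, and dividing by ⟨B, x*⟩ > 0 gives ψ(x*) ≤ t*. -/

open Finset

theorem IsMinOn.csInf_image_eq {α β : Type*} [ConditionallyCompleteLinearOrder β] {f : α → β}
    {s : Set α} {a : α} (h : IsMinOn f s a) (ha : a ∈ s) : sInf (f '' s) = f a :=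
  IsLeast.csInf_eq ⟨Set.mem_image_of_mem f ha, Set.forall_mem_image.2 h⟩

theorem isMinOn_div_of_isMinOn_sub_mul {α : Type*} {f g : α → ℝ} {s : Set α} {x₀ x : α}
    (hg : ∀ y ∈ s, 0 < g y) (hx₀ : x₀ ∈ s) (h₀ : IsMinOn (fun y => f y / g y) s x₀) (hx : x ∈ s)
    (hmin : IsMinOn (fun y => f y - f x₀ / g x₀ * g y) s x) :
    IsMinOn (fun y => f y / g y) s x := by
  intro y hy
  have hx₀_zero : f x₀ - f x₀ / g x₀ * g x₀ = 0 := by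
    rw [div_mul_cancel₀ _ (hg x₀ hx₀).ne', sub_self]
  have hx_le : f x / g x ≤ f x₀ / g x₀ := by
    rw [div_le_iff₀ (hg x hx)]
    linarith [isMinOn_iff.1 hmin x₀ hx₀]
  exact hx_le.trans (h₀ hy)

/-- Proposition 3: any minimizer over C of the linear metric defined by
L* = A − t*·B is also a minimizer of the ratio-of-linear metric ψ = ⟨A,·⟩/⟨B,·⟩. -/
theorem stmt_2 {d : ℕ} (C : Set (Fin d → ℝ)) (hne : C.Nonempty) (hcomp : IsCompact C)
    (A B : Fin d → ℝ) (hB : ∀ x ∈ C, 0 < ∑ i, B i * x i)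
    (ψ : (Fin d → ℝ) → ℝ)
    (hψ : ∀ x, ψ x = (∑ i, A i * x i) / (∑ i, B i * x i))
    (tstar : ℝ) (ht : tstar = sInf (ψ '' C))
    (Lstar : Fin d → ℝ) (hL : Lstar = fun i => A i - tstar * B i)
    (xstar : Fin d → ℝ) (hxstar : xstar ∈ C)
    (hmin : ∀ y ∈ C, ∑ i, Lstar i * xstar i ≤ ∑ i, Lstar i * y i) :
    ψ xstar = sInf (ψ '' C) := by
  have hψ_eq : ψ = fun x => (∑ i, A i * x i) / ∑ i, B i * x i := funext hψ
  have hcont : ContinuousOn ψ C := by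
    rw [hψ_eq]
    exact ContinuousOn.div (by fun_prop) (by fun_prop) fun x hx => (hB x hx).ne'
  obtain ⟨x₀, hx₀, hmin₀⟩ := hcomp.exists_isMinOn hne hcont
  have ht₀ : tstar = (∑ i, A i * x₀ i) / ∑ i, B i * x₀ i := by
    rw [ht, hmin₀.csInf_image_eq hx₀, hψ]
  have hLstar : ∀ y : Fin d → ℝ,
      ∑ i, Lstar i * y i = ∑ i, A i * y i - tstar * ∑ i, B i * y i := fun y => by
    simp only [hL, sub_mul, sum_sub_distrib, mul_sum, mul_assoc]
  have hxstar_min : IsMinOn ψ C xstar := by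
    rw [hψ_eq] at hmin₀ ⊢
    refine isMinOn_div_of_isMinOn_sub_mul hB hx₀ hmin₀ hxstar (isMinOn_iff.2 fun y hy => ?_)
    simpa only [← ht₀, ← hLstar] using hmin y hy
  rw [hxstar_min.csInf_image_eq hxstar]
end

section
/- Let E₀ = {x ∈ R^d : (x − c₀)ᵀ H₀⁻¹ (x − c₀) ≤ 1} be an ellipsoid with H₀ positive definite, and let g ∈ R^d be nonzero. Then there exists an ellipsoid E containing E₀ ∩ {x : ⟨g, x − c₀⟩ ≥ 0} with vol(E) ≤ exp(−1/(2d)) · vol(E₀). -/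
/-!
Write `H₀ = B Bᵀ`. The affine map `u ↦ c₀ + B u` carries the unit ball onto `E₀`, the half ball
`{u ⬝ᵥ u ≤ 1, 0 ≤ e ⬝ᵥ u}` (with `e` the unit vector along `Bᵀ g`) onto the half-ellipsoid, and
multiplies volumes by `|det B|`, so it suffices to treat the unit ball. With `x = 1/d`, the half
ball lies in the ellipsoid `{w | ‖M (w - x/(1+x) e)‖ ≤ 1}`, where `M` stretches by `1 + x` along `e`
and by `√(1 - x²)` orthogonally to it. Its volume is `1 / det M` times that of the ball, and
`det M = (1 + x) (1 - x²)^((d-1)/2) ≥ exp (1/(2d))`: after taking logarithms this is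
`(1 + x) log (1 + x) + (1 - x) log (1 - x) ≥ x²`, whose power series has the nonnegative
coefficients `1 / (m (2m - 1))` at `x^(2m)`.
-/

open Matrix MeasureTheory Pointwise

section

open Real

lemma sq_le_one_add_mul_log_add_one_sub_mul_log {x : ℝ} (hx₀ : 0 ≤ x) (hx₁ : x < 1) :
    x ^ 2 ≤ (1 + x) * log (1 + x) + (1 - x) * log (1 - x) := by
  have hx : |x| < 1 := by rwa [abs_of_nonneg hx₀]
  have hx2 : |x ^ 2| < 1 := by rw [abs_pow]; exact pow_lt_one₀ (abs_nonneg x) hx two_ne_zero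
  have hsum := ((hasSum_log_sub_log_of_abs_lt_one hx).mul_left x).add
    (hasSum_pow_div_log_of_abs_lt_one hx2).neg
  have hlog : log (1 - x ^ 2) = log (1 + x) + log (1 - x) := by
    rw [← log_mul (by linarith) (by linarith)]; ring_nf
  have hterm : ∀ k : ℕ,
      x * (2 * (1 / (2 * k + 1)) * x ^ (2 * k + 1)) + -((x ^ 2) ^ (k + 1) / (k + 1))
        = x ^ (2 * k + 2) * (2 / (2 * k + 1) - 1 / (k + 1)) := fun k => by ring
  simp only [hterm, neg_neg, hlog] at hsum
  calc x ^ 2 = x ^ (2 * 0 + 2) * (2 / (2 * (0 : ℕ) + 1) - 1 / ((0 : ℕ) + 1)) := by norm_num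
    _ ≤ _ := le_hasSum hsum 0 fun k _ => mul_nonneg (pow_nonneg hx₀ _) <| sub_nonneg.mpr <| by
          rw [div_le_div_iff₀ (by positivity) (by positivity)]; linarith
    _ = _ := by ring

lemma exp_one_div_two_mul_le {d : ℕ} (hd : 0 < d) :
    exp (1 / (2 * d)) ≤ (1 + (d : ℝ)⁻¹) * √(1 - (d : ℝ)⁻¹ ^ 2) ^ (d - 1) := by
  obtain rfl | hd₂ := (Nat.one_le_iff_ne_zero.mpr hd.ne').eq_or_lt
  · have : (1 : ℝ) / 2 ≤ log 2 := by linarith [log_two_gt_d9]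
    rw [← le_log_iff_exp_le (by norm_num)]
    norm_num [this]
  set x : ℝ := (d : ℝ)⁻¹ with hx
  have hdx : (d : ℝ) * x = 1 := mul_inv_cancel₀ (by positivity)
  have hx₀ : 0 < x := by positivity
  have hx₁ : x < 1 := inv_lt_one_of_one_lt₀ (by exact_mod_cast hd₂)
  have hsq : 0 < 1 - x ^ 2 := by nlinarith
  rw [← le_log_iff_exp_le (by positivity), log_mul (by positivity) (by positivity), log_pow,
    log_sqrt hsq.le, show 1 - x ^ 2 = (1 + x) * (1 - x) by ring,
    log_mul (by positivity) (by linarith), Nat.cast_sub hd, Nat.cast_one,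
    show 1 / (2 * (d : ℝ)) = x / 2 by rw [hx]; ring]
  linear_combination (d / 2 : ℝ) * sq_le_one_add_mul_log_add_one_sub_mul_log hx₀.le hx₁
    + (log (1 + x) - log (1 - x) - x) / 2 * hdx

end

variable {n : Type*} [Fintype n]

lemma image_add_mulVec_image_add_mulVec (c c' : n → ℝ) (A A' : Matrix n n ℝ)
    (s : Set (n → ℝ)) :
    (fun u => c + A *ᵥ u) '' ((fun w => c' + A' *ᵥ w) '' s)
      = (fun w => (c + A *ᵥ c') + (A * A') *ᵥ w) '' s := by
  rw [Set.image_image]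
  simp only [mulVec_add, mulVec_mulVec, add_assoc]

lemma exists_smul_dotProduct_self_eq_one {f : n → ℝ} (hf : f ≠ 0) :
    ∃ t : ℝ, 0 < t ∧ (t • f) ⬝ᵥ (t • f) = 1 := by
  have hff : 0 < f ⬝ᵥ f := by simpa only [star_trivial] using dotProduct_star_self_pos_iff.mpr hf
  refine ⟨(√(f ⬝ᵥ f))⁻¹, by positivity, ?_⟩
  rw [smul_dotProduct, dotProduct_smul, smul_eq_mul, smul_eq_mul, ← mul_assoc, ← sq,
    inv_pow, Real.sq_sqrt hff.le, inv_mul_cancel₀ hff.ne']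

section UnitVector

variable {e : n → ℝ}

lemma card_pos_of_dotProduct_self_eq_one (he : e ⬝ᵥ e = 1) : 0 < Fintype.card n := by
  obtain ⟨i, -, -⟩ := Finset.exists_ne_zero_of_sum_ne_zero (he ▸ one_ne_zero : e ⬝ᵥ e ≠ 0)
  exact Fintype.card_pos_iff.mpr ⟨i⟩

lemma sq_dotProduct_le_dotProduct_self (he : e ⬝ᵥ e = 1) (u : n → ℝ) :
    (e ⬝ᵥ u) ^ 2 ≤ u ⬝ᵥ u := by
  have h := dotProduct_star_self_nonneg (u - (e ⬝ᵥ u) • e)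
  simp only [star_trivial, sub_dotProduct, dotProduct_sub, smul_dotProduct, dotProduct_smul, he,
    smul_eq_mul, dotProduct_comm u e] at h
  nlinarith

end UnitVector

variable [DecidableEq n]

lemma dotProduct_inv_mul_transpose_mulVec {A : Matrix n n ℝ} (hA : IsUnit A) (u : n → ℝ) :
    (A *ᵥ u) ⬝ᵥ (A * Aᵀ)⁻¹ *ᵥ (A *ᵥ u) = u ⬝ᵥ u := by
  have hA' : IsUnit A.det := (isUnit_iff_isUnit_det A).mp hA
  rw [Matrix.mul_inv_rev, mulVec_mulVec, Matrix.mul_assoc, nonsing_inv_mul _ hA', Matrix.mul_one,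
    dotProduct_mulVec, ← mulVec_transpose, transpose_nonsing_inv, transpose_transpose,
    mulVec_mulVec, nonsing_inv_mul _ hA', one_mulVec]

lemma setOf_dotProduct_inv_mul_transpose_le_one {A : Matrix n n ℝ} (hA : IsUnit A) (c : n → ℝ) :
    {x | (x - c) ⬝ᵥ (A * Aᵀ)⁻¹ *ᵥ (x - c) ≤ 1} = (fun u => c + A *ᵥ u) '' {u | u ⬝ᵥ u ≤ 1} := by
  have hA' : IsUnit A.det := (isUnit_iff_isUnit_det A).mp hA
  ext x
  constructor
  · intro hx
    have hxc : A *ᵥ A⁻¹ *ᵥ (x - c) = x - c := by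
      rw [mulVec_mulVec, mul_nonsing_inv _ hA', one_mulVec]
    refine ⟨A⁻¹ *ᵥ (x - c), ?_, by simp only [hxc, add_sub_cancel]⟩
    rwa [Set.mem_ofPred_eq, ← dotProduct_inv_mul_transpose_mulVec hA, hxc]
  · rintro ⟨u, hu, rfl⟩
    simpa only [Set.mem_ofPred_eq, add_sub_cancel_left, dotProduct_inv_mul_transpose_mulVec hA]
      using hu

lemma volume_image_add_mulVec (c : n → ℝ) (A : Matrix n n ℝ) (s : Set (n → ℝ)) :
    volume ((fun u => c + A *ᵥ u) '' s) = ENNReal.ofReal |A.det| * volume s := by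
  have : (fun u => c + A *ᵥ u) '' s = c +ᵥ (Matrix.toLin' A '' s) := by
    rw [← Set.image_vadd, ← Set.image_comp]
    rfl
  rw [this, measure_vadd, Measure.addHaar_image_linearMap, LinearMap.det_toLin']

lemma posDef_mul_transpose {A : Matrix n n ℝ} (hA : IsUnit A) : (A * Aᵀ).PosDef := by
  simpa only [conjTranspose_eq_transpose_of_trivial] using
    PosDef.mul_conjTranspose_self A (vecMul_injective_iff_isUnit.mpr hA)

open scoped MatrixOrder in
lemma Matrix.PosDef.exists_isUnit_mul_transpose_eq {H : Matrix n n ℝ} (hH : H.PosDef) :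
    ∃ B : Matrix n n ℝ, IsUnit B ∧ B * Bᵀ = H := by
  obtain ⟨B, hB, rfl⟩ :=
    CStarAlgebra.isStrictlyPositive_iff_eq_mul_star_self.mp hH.isStrictlyPositive
  exact ⟨B, hB, by rw [star_eq_conjTranspose, conjTranspose_eq_transpose_of_trivial]⟩

def axialScaling (e : n → ℝ) (α β : ℝ) : Matrix n n ℝ :=
  α • vecMulVec e e + β • (1 - vecMulVec e e)

section UnitVector

variable {e : n → ℝ}

lemma axialScaling_mulVec (e : n → ℝ) (α β : ℝ) (v : n → ℝ) :
    axialScaling e α β *ᵥ v = (α * (e ⬝ᵥ v)) • e + β • (v - (e ⬝ᵥ v) • e) := by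
  simp only [axialScaling, add_mulVec, smul_mulVec, sub_mulVec, one_mulVec, vecMulVec_mulVec,
    op_smul_eq_smul, smul_smul]

lemma dotProduct_self_axialScaling_mulVec (he : e ⬝ᵥ e = 1) (α β : ℝ) (v : n → ℝ) :
    (axialScaling e α β *ᵥ v) ⬝ᵥ (axialScaling e α β *ᵥ v)
      = α ^ 2 * (e ⬝ᵥ v) ^ 2 + β ^ 2 * (v ⬝ᵥ v - (e ⬝ᵥ v) ^ 2) := by
  rw [axialScaling_mulVec]
  simp only [add_dotProduct, dotProduct_add, smul_dotProduct, dotProduct_smul, sub_dotProduct,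
    dotProduct_sub, he, smul_eq_mul, dotProduct_comm v e]
  ring

lemma det_axialScaling (he : e ⬝ᵥ e = 1) (α β : ℝ) :
    (axialScaling e α β).det = α * β ^ (Fintype.card n - 1) := by
  -- the rank-one update formula needs `β ≠ 0`; the case `β = 0` follows by continuity
  suffices h : Set.EqOn (fun β => (axialScaling e α β).det)
      (fun β => α * β ^ (Fintype.card n - 1)) {0}ᶜ from
    congrFun (Continuous.ext_on (dense_compl_singleton 0) (by unfold axialScaling; fun_prop)
      (by fun_prop) h) β
  intro β (hβ : β ≠ 0)
  have hsplit : axialScaling e α β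
      = β • (1 + replicateCol Unit (((α - β) / β) • e) * replicateRow Unit e) := by
    rw [← vecMulVec_eq, smul_vecMulVec, smul_add, smul_smul, mul_div_cancel₀ _ hβ,
      axialScaling]
    module
  have hpow : β ^ Fintype.card n = β * β ^ (Fintype.card n - 1) := by
    rw [← pow_succ', Nat.sub_add_cancel (card_pos_of_dotProduct_self_eq_one he)]
  simp only
  rw [hsplit, det_smul, det_one_add_replicateCol_mul_replicateRow, dotProduct_smul, he,
    smul_eq_mul, mul_one, hpow]
  field_simp
  ring

lemma halfBall_subset_image_inv_axialScaling (he : e ⬝ᵥ e = 1) {x : ℝ} (hx₀ : 0 ≤ x)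
    (hx₁ : x ≤ 1) (hM : IsUnit (axialScaling e (1 + x) √(1 - x ^ 2))) :
    {u | u ⬝ᵥ u ≤ 1 ∧ 0 ≤ e ⬝ᵥ u} ⊆ (fun w => (x / (1 + x)) • e +
      (axialScaling e (1 + x) √(1 - x ^ 2))⁻¹ *ᵥ w) '' {w | w ⬝ᵥ w ≤ 1} := by
  rintro u ⟨hu, heu⟩
  refine ⟨axialScaling e (1 + x) √(1 - x ^ 2) *ᵥ (u - (x / (1 + x)) • e), ?_, ?_⟩
  · have hs := sq_dotProduct_le_dotProduct_self he u
    rw [Set.mem_ofPred_eq, dotProduct_self_axialScaling_mulVec he, Real.sq_sqrt (by nlinarith)]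
    simp only [dotProduct_sub, sub_dotProduct, dotProduct_smul, smul_dotProduct, he, smul_eq_mul,
      dotProduct_comm u e]
    set s := e ⬝ᵥ u
    have hκ : (1 + x) * (x / (1 + x)) = x := mul_div_cancel₀ x (by linarith)
    have hs₁ : s ≤ 1 := by nlinarith
    have hr := mul_le_mul_of_nonneg_left hu (by nlinarith : 0 ≤ 1 - x ^ 2)
    have hss := mul_nonneg (mul_nonneg hx₀ (by linarith : 0 ≤ 1 + x))
      (mul_nonneg heu (sub_nonneg.mpr hs₁))
    -- the left side is `1 - (1 - x²) (1 - u ⬝ᵥ u) - 2 x (1 + x) s (1 - s)`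
    linear_combination (-(2 * (1 + x) * s - (1 + x) * (x / (1 + x)) - x)) * hκ + hr + 2 * hss
  · simp only [mulVec_mulVec, nonsing_inv_mul _ ((isUnit_iff_isUnit_det _).mp hM), one_mulVec,
      add_sub_cancel]

end UnitVector

/-- Lemma B.3 (John–Löwner ellipsoid volume reduction): there is an ellipsoid
containing the half-ellipsoid E₀ ∩ {x : ⟨g, x − c₀⟩ ≥ 0} whose volume is at
most exp(−1/(2d)) times the volume of E₀. -/
theorem stmt_10 {d : ℕ} (H₀ : Matrix (Fin d) (Fin d) ℝ) (hH₀ : H₀.PosDef)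
    (c₀ g : Fin d → ℝ) (hg : g ≠ 0) :
    ∃ (H : Matrix (Fin d) (Fin d) ℝ) (c : Fin d → ℝ), H.PosDef ∧
      ({x : Fin d → ℝ | (x - c₀) ⬝ᵥ H₀⁻¹.mulVec (x - c₀) ≤ 1} ∩
          {x : Fin d → ℝ | 0 ≤ g ⬝ᵥ (x - c₀)})
        ⊆ {x : Fin d → ℝ | (x - c) ⬝ᵥ H⁻¹.mulVec (x - c) ≤ 1} ∧
      volume {x : Fin d → ℝ | (x - c) ⬝ᵥ H⁻¹.mulVec (x - c) ≤ 1}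
        ≤ ENNReal.ofReal (Real.exp (-1 / (2 * d))) *
            volume {x : Fin d → ℝ | (x - c₀) ⬝ᵥ H₀⁻¹.mulVec (x - c₀) ≤ 1} := by
  obtain ⟨B, hB, rfl⟩ := hH₀.exists_isUnit_mul_transpose_eq
  obtain ⟨t, ht, he⟩ := exists_smul_dotProduct_self_eq_one (f := g ᵥ* B)
    (by simpa using (vecMul_injective_iff_isUnit.mpr hB).ne hg)
  have hd : 0 < d := by simpa using card_pos_of_dotProduct_self_eq_one he
  set x : ℝ := (d : ℝ)⁻¹
  set M := axialScaling (t • (g ᵥ* B)) (1 + x) √(1 - x ^ 2)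
  have hdet : Real.exp (1 / (2 * d)) ≤ M.det := by
    rw [det_axialScaling he, Fintype.card_fin]
    exact exp_one_div_two_mul_le hd
  have hMpos : 0 < M.det := (Real.exp_pos _).trans_le hdet
  have hM : IsUnit M := (isUnit_iff_isUnit_det M).mpr hMpos.ne'.isUnit
  have hA : IsUnit (B * M⁻¹) := hB.mul (isUnit_nonsing_inv_iff.mpr hM)
  refine ⟨(B * M⁻¹) * (B * M⁻¹)ᵀ, c₀ + B *ᵥ ((x / (1 + x)) • t • (g ᵥ* B)),
    posDef_mul_transpose hA, ?_, ?_⟩ <;>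
    rw [setOf_dotProduct_inv_mul_transpose_le_one hB, setOf_dotProduct_inv_mul_transpose_le_one hA]
  · rw [← image_add_mulVec_image_add_mulVec]
    rintro _ ⟨⟨u, hu, rfl⟩, hgu⟩
    rw [Set.mem_ofPred_eq, add_sub_cancel_left, dotProduct_mulVec] at hgu
    refine Set.mem_image_of_mem _ (halfBall_subset_image_inv_axialScaling he (by positivity)
      (inv_le_one_of_one_le₀ (by exact_mod_cast hd)) hM ⟨hu, ?_⟩)
    simpa [smul_dotProduct] using mul_nonneg ht.le hgu
  · rw [volume_image_add_mulVec, volume_image_add_mulVec, ← mul_assoc,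
      ← ENNReal.ofReal_mul (by positivity), det_mul, abs_mul, mul_comm |B.det|]
    gcongr
    rw [det_nonsing_inv, Ring.inverse_eq_inv', abs_inv, abs_of_pos hMpos, neg_div, Real.exp_neg]
    exact inv_anti₀ (Real.exp_pos _) hdet
end

section
/- Let η, η̂ : X → Δ_n be measurable maps into the probability simplex, μ a probability distribution on X, and L ∈ [0,1]^{n×n} a loss matrix with ‖L‖_∞ ≤ 1. Define ĝ(x) ∈ argmin_j Σ_i η̂_i(x) L_{ij} and h*(x) ∈ argmin_j Σ_i η_i(x) L_{ij}. Then E_X[Σ_i η_i(X) L_{i,ĝ(X)}] ≤ E_X[Σ_i η_i(X) L_{i,h*(X)}] + E_X[‖η̂(X) − η(X)‖₁]. -/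
/-!
Pointwise, write the η-cost of ĝ as its η̂-cost plus a correction, use that ĝ minimizes the
η̂-cost, and undo the substitution at h*: the two corrections combine into
`∑ i, (η i - η̂ i) * (L i ĝ - L i h*)`, which Hölder's inequality bounds by `‖η̂ - η‖₁` since
the columns of `L` differ by at most `1`. Integrating gives the claim.
-/

open MeasureTheory Finset

section Pointwise

variable {ι : Type*} [Fintype ι]

theorem sum_mul_le_sum_mul_add_sum_abs_sub (p q : ι → ℝ) {L : ι → ι → ℝ}
    (hL : ∀ i j j', |L i j - L i j'| ≤ 1) {g : ι}
    (hg : ∀ j, ∑ i, q i * L i g ≤ ∑ i, q i * L i j) (j : ι) :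
    ∑ i, p i * L i g ≤ ∑ i, p i * L i j + ∑ i, |q i - p i| := by
  have holder : ∑ i, (p i - q i) * (L i g - L i j) ≤ ∑ i, |q i - p i| := by
    refine sum_le_sum fun i _ => ?_
    calc (p i - q i) * (L i g - L i j)
        ≤ |p i - q i| * |L i g - L i j| := (le_abs_self _).trans (abs_mul _ _).le
      _ ≤ |q i - p i| := by
        rw [abs_sub_comm]; exact mul_le_of_le_one_right (abs_nonneg _) (hL i g j)
  have split : ∑ i, p i * L i g - ∑ i, p i * L i j
      = (∑ i, q i * L i g - ∑ i, q i * L i j) + ∑ i, (p i - q i) * (L i g - L i j) := by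
    simp only [← sum_sub_distrib, ← sum_add_distrib]
    exact sum_congr rfl fun i _ => by ring
  linarith [hg j]

end Pointwise

section Integrability

variable {X ι : Type*} [MeasurableSpace X] {μ : Measure X} [IsFiniteMeasure μ] [Fintype ι]
  {f : X → ι → ℝ}

theorem integrable_apply_of_mem_stdSimplex (hf : Measurable f)
    (hfs : ∀ x, f x ∈ stdSimplex ℝ ι) (i : ι) : Integrable (fun x => f x i) μ :=
  Integrable.of_bound ((measurable_pi_apply i).comp hf).aestronglyMeasurable 1 <| ae_of_all _ fun x => by
    rw [Real.norm_of_nonneg ((hfs x).1 i)]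
    exact (mem_Icc_of_mem_stdSimplex (hfs x) i).2

theorem integrable_sum_mul_apply_of_mem_stdSimplex [MeasurableSpace ι]
    [MeasurableSingletonClass ι] (hf : Measurable f) (hfs : ∀ x, f x ∈ stdSimplex ℝ ι)
    (L : ι → ι → ℝ) {h : X → ι} (hh : Measurable h) :
    Integrable (fun x => ∑ i, f x i * L i (h x)) μ :=
  integrable_finsetSum _ fun i _ =>
    (integrable_apply_of_mem_stdSimplex hf hfs i).mul_bdd
      ((measurable_of_countable (L i)).comp hh).aestronglyMeasurable
      (ae_of_all _ fun x => norm_le_pi_norm (L i) (h x))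

theorem integrable_sum_abs_sub_of_mem_stdSimplex {f' : X → ι → ℝ} (hf : Measurable f)
    (hfs : ∀ x, f x ∈ stdSimplex ℝ ι) (hf' : Measurable f')
    (hfs' : ∀ x, f' x ∈ stdSimplex ℝ ι) :
    Integrable (fun x => ∑ i, |f x i - f' x i|) μ :=
  integrable_finsetSum _ fun i _ =>
    ((integrable_apply_of_mem_stdSimplex hf hfs i).sub
      (integrable_apply_of_mem_stdSimplex hf' hfs' i)).abs

end Integrability

theorem stmt_14_general {X : Type*} [MeasurableSpace X] {n : ℕ}
    (μ : Measure X) [IsProbabilityMeasure μ]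
    (η ηhat : X → (Fin n → ℝ))
    (hη : Measurable η) (hηhat : Measurable ηhat)
    (hηsim : ∀ x, η x ∈ stdSimplex ℝ (Fin n))
    (hηhatsim : ∀ x, ηhat x ∈ stdSimplex ℝ (Fin n))
    (L : Fin n → Fin n → ℝ) (hLrange : ∀ i j, L i j ∈ Set.Icc (0:ℝ) 1)
    (ghat hstar : X → Fin n) (hhstar : Measurable hstar)
    (hghatmin : ∀ x, ∀ j, ∑ i, ηhat x i * L i (ghat x) ≤ ∑ i, ηhat x i * L i j) :
    (∫ x, ∑ i, η x i * L i (ghat x) ∂μ) ≤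
      (∫ x, ∑ i, η x i * L i (hstar x) ∂μ) +
        ∫ x, ∑ i, |ηhat x i - η x i| ∂μ := by
  have hL : ∀ i j j', |L i j - L i j'| ≤ 1 := fun i j j' =>
    (Real.dist_eq _ _).symm.trans_le (Real.dist_le_of_mem_Icc_01 (hLrange i j) (hLrange i j'))
  have hcost_nonneg : 0 ≤ᵐ[μ] fun x => ∑ i, η x i * L i (ghat x) :=
    ae_of_all _ fun x => sum_nonneg fun i _ => mul_nonneg ((hηsim x).1 i) (hLrange i _).1
  have hstar_int := integrable_sum_mul_apply_of_mem_stdSimplex (μ := μ) hη hηsim L hhstar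
  have err_int := integrable_sum_abs_sub_of_mem_stdSimplex (μ := μ) hηhat hηhatsim hη hηsim
  rw [← integral_add hstar_int err_int]
  exact integral_mono_of_nonneg hcost_nonneg (hstar_int.add err_int) <| ae_of_all _ fun x =>
    sum_mul_le_sum_mul_add_sum_abs_sub (η x) (ηhat x) hL (hghatmin x) (hstar x)

/-- Theorem 12, first part (regret bound for the plug-in LMO): the
cost-sensitive regret of the plug-in classifier built from an estimated class
probability function η̂ is bounded by the expected ℓ₁ estimation error. -/
theorem stmt_14 {X : Type*} [MeasurableSpace X] {n : ℕ}
    (μ : Measure X) [IsProbabilityMeasure μ]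
    (η ηhat : X → (Fin n → ℝ))
    (hη : Measurable η) (hηhat : Measurable ηhat)
    (hηsim : ∀ x, η x ∈ stdSimplex ℝ (Fin n))
    (hηhatsim : ∀ x, ηhat x ∈ stdSimplex ℝ (Fin n))
    (L : Fin n → Fin n → ℝ) (hLrange : ∀ i j, L i j ∈ Set.Icc (0:ℝ) 1)
    (ghat hstar : X → Fin n) (hghat : Measurable ghat) (hhstar : Measurable hstar)
    (hghatmin : ∀ x, ∀ j, ∑ i, ηhat x i * L i (ghat x) ≤ ∑ i, ηhat x i * L i j)
    (hhstarmin : ∀ x, ∀ j, ∑ i, η x i * L i (hstar x) ≤ ∑ i, η x i * L i j) :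
    (∫ x, ∑ i, η x i * L i (ghat x) ∂μ) ≤
      (∫ x, ∑ i, η x i * L i (hstar x) ∂μ) +
        ∫ x, ∑ i, |ηhat x i - η x i| ∂μ :=
  stmt_14_general μ η ηhat hη hηhat hηsim hηhatsim L hLrange ghat hstar hhstar hghatmin
end
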